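/- Let S_n be the star graph on n ≥ 2 vertices and let 1 < p < ∞. Then (1 + (n-1)/2^p)^{1/p} ≤ ‖M_{S_n}‖_p ≤ ((n+5)/2)^{1/p}. In particular ‖M_{S_n}‖_p is comparable to n^{1/p}, with implied constants independent of n. -/

import Mathlib

open scoped Classical
open Finset

noncomputable section

variable {V : Type*} [Fintype V]

/-- metric ball of radius `r` centered at `v` in the graph `G` -/
def gBall (G : SimpleGraph V) (v : V) (r : ℕ) : Finset V :=
  Finset.univ.filter fun w => G.dist v w ≤ r

/-- Hardy–Littlewood maximal operator on the graph `G` -/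
def maxOp (G : SimpleGraph V) (f : V → ℝ) (v : V) : ℝ :=
  ⨆ k : Fin (Fintype.card V), (∑ w ∈ gBall G v k.1, |f w|) / ((gBall G v k.1).card : ℝ)

/-- ℓ^p (quasi)norm of a function on the vertices -/
def pNorm (p : ℝ) (f : V → ℝ) : ℝ := (∑ v, |f v| ^ p) ^ (1 / p)

/-- operator (quasi)norm of the maximal operator of `G` on ℓ^p -/
def opNorm (G : SimpleGraph V) (p : ℝ) : ℝ :=
  ⨆ f : {f : V → ℝ // f ≠ 0}, pNorm p (maxOp G f.1) / pNorm p f.1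

/-- weak ℓ^p norm -/
def wNorm (p : ℝ) (f : V → ℝ) : ℝ :=
  ⨆ t : {t : ℝ // 0 < t},
    t.1 * ((Finset.univ.filter fun v => t.1 < |f v|).card : ℝ) ^ (1 / p)

/-- weak-type operator norm of the maximal operator of `G` -/
def wOpNorm (G : SimpleGraph V) (p : ℝ) : ℝ :=
  ⨆ f : {f : V → ℝ // f ≠ 0}, wNorm p (maxOp G f.1) / pNorm p f.1

/-- maximal operator over all graphs on `V` isomorphic to `G` -/
def maxOpIso (G : SimpleGraph V) (f : V → ℝ) (j : V) : ℝ :=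
  ⨆ H : {H : SimpleGraph V // Nonempty (H ≃g G)}, maxOp H.1 f j

/-- operator norm of `maxOpIso` on ℓ^p -/
def opNormIso (G : SimpleGraph V) (p : ℝ) : ℝ :=
  ⨆ f : {f : V → ℝ // f ≠ 0}, pNorm p (maxOpIso G f.1) / pNorm p f.1

/-- Kronecker delta at `k` -/
def kdelta (k : V) : V → ℝ := fun j => if j = k then 1 else 0

/-- star graph on `Fin n` with center `0` -/
def starGraph (n : ℕ) : SimpleGraph (Fin n) :=
  SimpleGraph.fromRel fun i _ => i.1 = 0

/-- diameter of a graph -/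
def gDiam (G : SimpleGraph V) : ℕ :=
  Finset.univ.sup fun p : V × V => G.dist p.1 p.2

/-- dilation index of a graph -/
def dilIndex (G : SimpleGraph V) : ℝ :=
  ⨆ x : V, ⨆ r : {r : ℕ // r ≤ gDiam G},
    ((gBall G x (3 * r.1)).card : ℝ) / ((gBall G x r.1).card : ℝ)

/-- overlapping index of a graph -/
def overlapIndex (G : SimpleGraph V) : ℕ :=
  sInf { r : ℕ | ∀ J : Finset (V × ℕ), ∃ I ⊆ J,
    J.biUnion (fun j => gBall G j.1 j.2) = I.biUnion (fun i => gBall G i.1 i.2) ∧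
    ∀ v : V, (I.filter fun i => v ∈ gBall G i.1 i.2).card ≤ r }

/-!
On the star, a ball around a leaf `v` is `{v}`, `{v, 0}` or everything, and a ball around the
center of positive radius is everything. So `(M f v)^p` is at most
`|f v|^p + (|f v|^p + |f 0|^p) / 2 + (mean |f|)^p` by convexity of `t ↦ t^p`. Summing over `v`,
the center term is counted `n / 2` times and the power-mean inequality bounds `n (mean |f|)^p` by
`‖f‖_p^p`, which gives the constant `(n + 5) / 2`. For the lower bound, the Dirac mass at the
center has maximal function `1` at the center and at least `1 / 2` at every leaf.
-/

namespace Real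

lemma rpow_max_le_add {a b : ℝ} (p : ℝ) (ha : 0 ≤ a) (hb : 0 ≤ b) :
    max a b ^ p ≤ a ^ p + b ^ p := by
  rcases le_total a b with h | h
  · rw [max_eq_right h]; linarith [rpow_nonneg ha p]
  · rw [max_eq_left h]; linarith [rpow_nonneg hb p]

lemma rpow_add_div_two_le {a b p : ℝ} (ha : 0 ≤ a) (hb : 0 ≤ b) (hp : 1 ≤ p) :
    ((a + b) / 2) ^ p ≤ (a ^ p + b ^ p) / 2 := by
  have := (convexOn_rpow hp).2 (Set.mem_Ici.2 ha) (Set.mem_Ici.2 hb)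
    (by norm_num : (0 : ℝ) ≤ 1 / 2) (by norm_num : (0 : ℝ) ≤ 1 / 2) (by norm_num)
  simp only [smul_eq_mul] at this
  rw [show (a + b) / 2 = 1 / 2 * a + 1 / 2 * b by ring]
  linarith

lemma card_mul_rpow_mean_le [Nonempty V] {p : ℝ} (hp : 1 ≤ p) {z : V → ℝ} (hz : ∀ v, 0 ≤ z v) :
    Fintype.card V * ((∑ v, z v) / Fintype.card V) ^ p ≤ ∑ v, z v ^ p := by
  have hcard : (0 : ℝ) < Fintype.card V := by exact_mod_cast Fintype.card_pos
  have := rpow_arith_mean_le_arith_mean_rpow univ (fun _ => 1 / (Fintype.card V : ℝ)) z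
    (fun _ _ => by positivity) (by simp [card_univ]) (fun v _ => hz v) hp
  rw [← mul_sum, ← mul_sum, one_div_mul_eq_div, one_div_mul_eq_div] at this
  rwa [← le_div_iff₀' hcard]

end Real

def ballAverage (G : SimpleGraph V) (f : V → ℝ) (v : V) (r : ℕ) : ℝ :=
  (∑ w ∈ gBall G v r, |f w|) / (#(gBall G v r) : ℝ)

lemma ballAverage_le_maxOp (G : SimpleGraph V) (f : V → ℝ) (v : V) {r : ℕ}
    (hr : r < Fintype.card V) : ballAverage G f v r ≤ maxOp G f v :=
  le_ciSup (f := fun k : Fin (Fintype.card V) => ballAverage G f v k)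
    (Set.finite_range _).bddAbove ⟨r, hr⟩

lemma maxOp_nonneg (G : SimpleGraph V) (f : V → ℝ) (v : V) : 0 ≤ maxOp G f v := by
  have : 0 ≤ ballAverage G f v 0 := by unfold ballAverage; positivity
  exact this.trans (ballAverage_le_maxOp G f v (Fintype.card_pos_iff.2 ⟨v⟩))

lemma maxOp_le {G : SimpleGraph V} {f : V → ℝ} {v : V} {B : ℝ}
    (h : ∀ r, ballAverage G f v r ≤ B) : maxOp G f v ≤ B :=
  have : Nonempty (Fin (Fintype.card V)) := ⟨⟨0, Fintype.card_pos_iff.2 ⟨v⟩⟩⟩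
  ciSup_le fun k => h k

lemma gBall_zero {G : SimpleGraph V} (hG : G.Connected) (v : V) : gBall G v 0 = {v} := by
  ext w
  simp [gBall, hG.dist_eq_zero_iff, eq_comm]

lemma pNorm_pos (p : ℝ) {f : V → ℝ} (hf : f ≠ 0) : 0 < pNorm p f := by
  obtain ⟨v, hv⟩ := Function.ne_iff.1 hf
  exact Real.rpow_pos_of_pos (sum_pos' (fun w _ => Real.rpow_nonneg (abs_nonneg (f w)) p)
    ⟨v, mem_univ v, Real.rpow_pos_of_pos (abs_pos.2 hv) p⟩) _

lemma pNorm_le_of_sum_rpow_le {p C : ℝ} (hp : 0 < p) (hC : 0 ≤ C) {f g : V → ℝ}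
    (h : ∑ v, |g v| ^ p ≤ C * ∑ v, |f v| ^ p) : pNorm p g ≤ C ^ (1 / p) * pNorm p f := by
  have hf : 0 ≤ ∑ v, |f v| ^ p := sum_nonneg fun v _ => Real.rpow_nonneg (abs_nonneg (f v)) p
  rw [pNorm, pNorm, ← Real.mul_rpow hC hf]
  exact Real.rpow_le_rpow (sum_nonneg fun v _ => Real.rpow_nonneg (abs_nonneg (g v)) p) h
    (by positivity)

lemma opNorm_le [Nonempty V] {G : SimpleGraph V} {p B : ℝ}
    (h : ∀ f, pNorm p (maxOp G f) ≤ B * pNorm p f) : opNorm G p ≤ B := by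
  obtain ⟨v⟩ := ‹Nonempty V›
  have : Nonempty {f : V → ℝ // f ≠ 0} :=
    ⟨⟨kdelta v, fun h => by simpa [kdelta] using congrFun h v⟩⟩
  exact ciSup_le fun f => (div_le_iff₀ (pNorm_pos p f.2)).2 (h f)

lemma pNorm_maxOp_div_le_opNorm {G : SimpleGraph V} {p B : ℝ}
    (h : ∀ f, pNorm p (maxOp G f) ≤ B * pNorm p f) {f : V → ℝ} (hf : f ≠ 0) :
    pNorm p (maxOp G f) / pNorm p f ≤ opNorm G p :=
  le_ciSup (f := fun f : {f : V → ℝ // f ≠ 0} => pNorm p (maxOp G f.1) / pNorm p f.1)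
    ⟨B, by rintro _ ⟨g, rfl⟩; exact (div_le_iff₀ (pNorm_pos p g.2)).2 (h g)⟩ ⟨f, hf⟩

namespace starGraph

variable {n : ℕ} [NeZero n] {p : ℝ}

lemma adj_iff {i j : Fin n} : (starGraph n).Adj i j ↔ i ≠ j ∧ (i = 0 ∨ j = 0) := by
  simp [starGraph, SimpleGraph.fromRel_adj, ← Fin.val_eq_zero_iff]

lemma dist_zero_le_one (w : Fin n) : (starGraph n).dist 0 w ≤ 1 := by
  rcases eq_or_ne w 0 with rfl | hw
  · simp
  · exact (SimpleGraph.dist_eq_one_iff_adj.2 (adj_iff.2 ⟨hw.symm, .inl rfl⟩)).le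

lemma connected : (starGraph n).Connected :=
  (SimpleGraph.connected_iff_exists_forall_reachable _).2 ⟨0, fun w => by
    rcases eq_or_ne w 0 with rfl | hw
    · rfl
    · exact (adj_iff.2 ⟨hw.symm, .inl rfl⟩).reachable⟩

lemma dist_le_two (v w : Fin n) : (starGraph n).dist v w ≤ 2 := by
  have := connected.dist_triangle (u := v) (v := 0) (w := w)
  rw [SimpleGraph.dist_comm (u := v) (v := 0)] at this
  linarith [dist_zero_le_one v, dist_zero_le_one w]

lemma gBall_of_two_le (v : Fin n) {r : ℕ} (hr : 2 ≤ r) : gBall (starGraph n) v r = univ :=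
  eq_univ_of_forall fun w => mem_filter.2 ⟨mem_univ w, (dist_le_two v w).trans hr⟩

lemma gBall_zero_of_one_le {r : ℕ} (hr : 1 ≤ r) : gBall (starGraph n) 0 r = univ :=
  eq_univ_of_forall fun w => mem_filter.2 ⟨mem_univ w, (dist_zero_le_one w).trans hr⟩

lemma gBall_one_of_ne_zero {v : Fin n} (hv : v ≠ 0) : gBall (starGraph n) v 1 = {v, 0} := by
  ext w
  simp only [gBall, mem_filter, mem_univ, true_and, mem_insert, mem_singleton,
    Nat.le_one_iff_eq_zero_or_eq_one, connected.dist_eq_zero_iff, SimpleGraph.dist_eq_one_iff_adj,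
    adj_iff]
  aesop

lemma ballAverage_le (f : Fin n → ℝ) (v : Fin n) (r : ℕ) :
    ballAverage (starGraph n) f v r ≤
      max |f v| (max ((|f v| + |f 0|) / 2) ((∑ w, |f w|) / n)) := by
  rcases Nat.lt_or_ge r 2 with hr | hr
  · interval_cases r
    · simp [ballAverage, gBall_zero connected]
    · rcases eq_or_ne v 0 with rfl | hv
      · simp [ballAverage, gBall_zero_of_one_le le_rfl]
      · simp [ballAverage, gBall_one_of_ne_zero hv, sum_pair hv, card_pair hv]
  · simp [ballAverage, gBall_of_two_le v hr]

lemma maxOp_rpow_le (hp : 1 ≤ p) (f : Fin n → ℝ) (v : Fin n) :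
    maxOp (starGraph n) f v ^ p ≤
      |f v| ^ p + (|f v| ^ p + |f 0| ^ p) / 2 + ((∑ w, |f w|) / n) ^ p := calc
  _ ≤ (max |f v| (max ((|f v| + |f 0|) / 2) ((∑ w, |f w|) / n))) ^ p :=
    Real.rpow_le_rpow (maxOp_nonneg _ f v) (maxOp_le (ballAverage_le f v)) (by linarith)
  _ ≤ |f v| ^ p + (((|f v| + |f 0|) / 2) ^ p + ((∑ w, |f w|) / n) ^ p) :=
    (Real.rpow_max_le_add p (abs_nonneg _) (by positivity)).trans
      (add_le_add_right (Real.rpow_max_le_add p (by positivity) (by positivity)) _)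
  _ ≤ _ := by
    linarith [Real.rpow_add_div_two_le (abs_nonneg (f v)) (abs_nonneg (f 0)) hp]

lemma sum_rpow_maxOp_le (hp : 1 ≤ p) (f : Fin n → ℝ) :
    ∑ v, |maxOp (starGraph n) f v| ^ p ≤ ((n + 5) / 2) * ∑ v, |f v| ^ p := by
  set T := ∑ v, |f v| ^ p
  have hcenter : |f 0| ^ p ≤ T :=
    single_le_sum (fun v _ => Real.rpow_nonneg (abs_nonneg (f v)) p) (mem_univ 0)
  have hmean := Real.card_mul_rpow_mean_le hp fun v => abs_nonneg (f v)
  simp only [Fintype.card_fin] at hmean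
  calc ∑ v, |maxOp (starGraph n) f v| ^ p
      ≤ ∑ v, (|f v| ^ p + (|f v| ^ p + |f 0| ^ p) / 2 + ((∑ w, |f w|) / n) ^ p) :=
        sum_le_sum fun v _ => by
          rw [abs_of_nonneg (maxOp_nonneg _ f v)]; exact maxOp_rpow_le hp f v
    _ = T + (T + n * |f 0| ^ p) / 2 + n * ((∑ w, |f w|) / n) ^ p := by
        simp only [sum_add_distrib, ← sum_div, sum_const, card_univ, Fintype.card_fin,
          nsmul_eq_mul, T]
    _ ≤ ((n + 5) / 2) * T := by
        nlinarith [mul_le_mul_of_nonneg_left hcenter (Nat.cast_nonneg (α := ℝ) n)]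

lemma pNorm_maxOp_le (hp : 1 ≤ p) (f : Fin n → ℝ) :
    pNorm p (maxOp (starGraph n) f) ≤ ((n + 5) / 2) ^ (1 / p) * pNorm p f :=
  pNorm_le_of_sum_rpow_le (by linarith) (by positivity) (sum_rpow_maxOp_le hp f)

lemma opNorm_le (hp : 1 ≤ p) : opNorm (starGraph n) p ≤ ((n + 5) / 2) ^ (1 / p) :=
  _root_.opNorm_le (pNorm_maxOp_le hp)

lemma one_le_maxOp_kdelta_zero : 1 ≤ maxOp (starGraph n) (kdelta 0) 0 := by
  have := ballAverage_le_maxOp (starGraph n) (kdelta 0) 0 (r := 0) Fintype.card_pos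
  simpa [ballAverage, gBall_zero connected, kdelta] using this

lemma half_le_maxOp_kdelta_zero (hn : 2 ≤ n) {v : Fin n} (hv : v ≠ 0) :
    1 / 2 ≤ maxOp (starGraph n) (kdelta 0) v := by
  have := ballAverage_le_maxOp (starGraph n) (kdelta 0) v (r := 1) (by simp; omega)
  simpa [ballAverage, gBall_one_of_ne_zero hv, sum_pair hv, card_pair hv, kdelta, hv] using this

lemma sum_rpow_maxOp_kdelta_zero_ge (hn : 2 ≤ n) (hp : 0 < p) :
    1 + (n - 1) / 2 ^ p ≤ ∑ v, |maxOp (starGraph n) (kdelta 0) v| ^ p := by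
  rw [← add_sum_erase _ _ (mem_univ 0)]
  gcongr
  · exact Real.one_le_rpow (one_le_maxOp_kdelta_zero.trans (le_abs_self _)) hp.le
  · calc ((n : ℝ) - 1) / 2 ^ p = #(univ.erase (0 : Fin n)) • (1 / 2 : ℝ) ^ p := by
          rw [card_erase_of_mem (mem_univ _), card_univ, Fintype.card_fin, nsmul_eq_mul,
            Nat.cast_sub (by omega), Real.div_rpow zero_le_one zero_le_two, Real.one_rpow]
          simp [div_eq_mul_inv]
      _ ≤ _ := card_nsmul_le_sum _ _ _ fun v hv => Real.rpow_le_rpow (by norm_num)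
          ((half_le_maxOp_kdelta_zero hn (ne_of_mem_erase hv)).trans (le_abs_self _)) hp.le

lemma le_opNorm (hn : 2 ≤ n) (hp : 1 ≤ p) :
    (1 + (n - 1) / 2 ^ p) ^ (1 / p) ≤ opNorm (starGraph n) p := by
  have hδ : kdelta (0 : Fin n) ≠ 0 := fun h => by simpa [kdelta] using congrFun h 0
  have hnorm : pNorm p (kdelta (0 : Fin n)) = 1 := by
    simp [pNorm, kdelta, apply_ite (fun x : ℝ => |x| ^ p), Real.zero_rpow (by linarith : p ≠ 0)]
  calc (1 + (n - 1) / 2 ^ p) ^ (1 / p)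
      ≤ pNorm p (maxOp (starGraph n) (kdelta 0)) / pNorm p (kdelta (0 : Fin n)) := by
        rw [hnorm, div_one]
        have hn' : (0 : ℝ) ≤ n - 1 := by simp; omega
        exact Real.rpow_le_rpow (by positivity) (sum_rpow_maxOp_kdelta_zero_ge hn (by linarith))
          (by positivity)
    _ ≤ opNorm (starGraph n) p := pNorm_maxOp_div_le_opNorm (pNorm_maxOp_le hp) hδ

end starGraph

lemma half_mul_rpow_one_div_le {x p : ℝ} (hp : 0 < p) (hx : 0 ≤ x) :
    1 / 2 * x ^ (1 / p) ≤ (1 + (x - 1) / 2 ^ p) ^ (1 / p) := by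
  have h2p : 1 ≤ (2 : ℝ) ^ p := Real.one_le_rpow one_le_two hp.le
  calc 1 / 2 * x ^ (1 / p) = (x / 2 ^ p) ^ (1 / p) := by
        rw [Real.div_rpow hx (by positivity), one_div p, Real.rpow_rpow_inv zero_le_two
          hp.ne']
        ring
    _ ≤ (1 + (x - 1) / 2 ^ p) ^ (1 / p) := by
        gcongr
        rw [sub_div]
        linarith [div_le_one_of_le₀ h2p (by positivity : (0 : ℝ) ≤ 2 ^ p)]

lemma rpow_one_div_le_two_mul {x p : ℝ} (hp : 1 ≤ p) (hx : 2 ≤ x) :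
    ((x + 5) / 2) ^ (1 / p) ≤ 2 * x ^ (1 / p) := calc
  _ ≤ (2 ^ p * x) ^ (1 / p) := by
      gcongr
      nlinarith [Real.self_le_rpow_of_one_le one_le_two hp]
  _ = 2 * x ^ (1 / p) := by
      rw [Real.mul_rpow (by positivity) (by linarith), one_div p,
        Real.rpow_rpow_inv zero_le_two (by linarith)]

/-- bounds for the ℓ^p norm of the maximal operator of the star,
for 1 < p < ∞, and its comparability to n^{1/p}. -/
theorem stmt13 :
    (∀ n : ℕ, 2 ≤ n → ∀ p : ℝ, 1 < p →
      (1 + ((n : ℝ) - 1) / 2 ^ p) ^ (1 / p) ≤ opNorm (starGraph n) p ∧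
      opNorm (starGraph n) p ≤ (((n : ℝ) + 5) / 2) ^ (1 / p)) ∧
    ∃ c C : ℝ, 0 < c ∧ 0 < C ∧ ∀ n : ℕ, 2 ≤ n → ∀ p : ℝ, 1 < p →
      c * (n : ℝ) ^ (1 / p) ≤ opNorm (starGraph n) p ∧
      opNorm (starGraph n) p ≤ C * (n : ℝ) ^ (1 / p) := by
  have bounds : ∀ n : ℕ, 2 ≤ n → ∀ p : ℝ, 1 < p →
      (1 + ((n : ℝ) - 1) / 2 ^ p) ^ (1 / p) ≤ opNorm (starGraph n) p ∧
      opNorm (starGraph n) p ≤ (((n : ℝ) + 5) / 2) ^ (1 / p) := fun n hn p hp =>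
    have : NeZero n := ⟨by omega⟩
    ⟨starGraph.le_opNorm hn hp.le, starGraph.opNorm_le hp.le⟩
  refine ⟨bounds, 1 / 2, 2, by norm_num, by norm_num, fun n hn p hp => ?_⟩
  have hn' : (2 : ℝ) ≤ n := by exact_mod_cast hn
  obtain ⟨hlower, hupper⟩ := bounds n hn p hp
  exact ⟨(half_mul_rpow_one_div_le (by linarith) (by linarith)).trans hlower,
    hupper.trans (rpow_one_div_le_two_mul hp.le hn')⟩
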